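/- Let k be a field, Π a presentation on a set E over k, and x ∈ k^E. If P and Q are disjoint subsets of E not meeting supp(x), then Π_x / P ∖ Q = (Π / P ∖ Q)_x as pairs of subspaces of k^{(E∖(P∪Q)) + *}. -/

import Mathlib

open Function Set

noncomputable section

variable {α k : Type*} [Field k]

/-- Axiom (O2) for a pair of families of subsets of the ground set `E`. -/
def AxO2 (E : Set α) (𝒞 𝒟 : Set (Set α)) : Prop :=
  ∀ P Q : Set α, ∀ e : α, Disjoint P Q → e ∉ P → e ∉ Q → P ∪ Q ∪ {e} = E →
    (∃ C ∈ 𝒞, e ∈ C ∧ C ⊆ P ∪ {e}) ∨ (∃ D ∈ 𝒟, e ∈ D ∧ D ⊆ Q ∪ {e})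

/-- Two vectors are orthogonal: supports intersect finitely and the sum of products is zero. -/
def Orthog (v w : α → k) : Prop :=
  (support v ∩ support w).Finite ∧ ∑ᶠ e, v e * w e = 0

/-- The subspace of `k^α` of functions supported in `E` (the formal meaning of `k^E`). -/
def FunOn (E : Set α) : Submodule k (α → k) where
  carrier := {v | support v ⊆ E}
  add_mem' hf hg := (support_add _ _).trans (union_subset hf hg)
  zero_mem' := by simp
  smul_mem' c f hf := (support_const_smul_subset c f).trans hf

/-- The set `S(V)` of supports of elements of `V`. -/
def suppSet (V : Submodule k (α → k)) : Set (Set α) := support '' (V : Set (α → k))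

/-- A presentation on the ground set `E` over `k`: a pair of orthogonal subspaces of `k^E`
whose families of supports satisfy (O2). -/
def IsPresentationOn (E : Set α) (V W : Submodule k (α → k)) : Prop :=
  V ≤ FunOn E ∧ W ≤ FunOn E ∧ (∀ v ∈ V, ∀ w ∈ W, Orthog v w) ∧
    AxO2 E (suppSet V) (suppSet W)

/-- Minimal nonempty elements of a family of sets. -/
def MinNE (𝒜 : Set (Set α)) (o : Set α) : Prop :=
  o ∈ 𝒜 ∧ o.Nonempty ∧ ∀ o' ∈ 𝒜, o'.Nonempty → o' ⊆ o → o' = o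

/-- A circuit of a matroid: a minimal dependent set. -/
def MatCircuit (M : Matroid α) (C : Set α) : Prop := Minimal M.Dep C

/-- The pair `(V, W)` presents the matroid `M` on ground set `E`. -/
def Presents (E : Set α) (V W : Submodule k (α → k)) (M : Matroid α) : Prop :=
  M.E = E ∧ (∀ C, MatCircuit M C ↔ MinNE (suppSet V) C) ∧
    (∀ D, MatCircuit M✶ D ↔ MinNE (suppSet W) D)

/-- Restriction of a vector to `X`, as a linear endomap of `k^α` (zeroing outside `X`). -/
def indLM (X : Set α) : (α → k) →ₗ[k] (α → k) where
  toFun v := X.indicator v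
  map_add' f g := by
    funext a
    by_cases h : a ∈ X <;> simp [Set.indicator_of_mem, Set.indicator_of_notMem, h]
  map_smul' c f := by
    funext a
    by_cases h : a ∈ X <;> simp [Set.indicator_of_mem, Set.indicator_of_notMem, h]

/-- Contraction `V.X` of a subspace to `X`. -/
def conV (V : Submodule k (α → k)) (X : Set α) : Submodule k (α → k) :=
  Submodule.map (indLM X) V

/-- Restriction of a pair `(V,W)` to the ground set `X`: `(V↾X, W.X)`. -/
def pairRes (Pr : Submodule k (α → k) × Submodule k (α → k)) (X : Set α) :
    Submodule k (α → k) × Submodule k (α → k) :=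
  (Pr.1 ⊓ FunOn X, conV Pr.2 X)

/-- Contraction of a pair `(V,W)` to the ground set `X`: `(V.X, W↾X)`. -/
def pairCon (Pr : Submodule k (α → k) × Submodule k (α → k)) (X : Set α) :
    Submodule k (α → k) × Submodule k (α → k) :=
  (conV Pr.1 X, Pr.2 ⊓ FunOn X)

/-- A set `I` is `Π`-independent (w.r.t. the vector subspace `V`): it includes no
nonempty support of a vector. -/
def PresIndep (V : Submodule k (α → k)) (I : Set α) : Prop :=
  ∀ v ∈ V, support v ⊆ I → v = 0

end

/-- The indicator vector `𝟙_s` of the single element `s`. -/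
noncomputable def oneAt {α k : Type*} [Field k] (s : α) : α → k := Set.indicator {s} 1

/-- The space `V_x = V + ⟨x - 𝟙_s⟩`, where `s` plays the role of the new element `*`. -/
noncomputable def Vx {α k : Type*} [Field k] (V : Submodule k (α → k)) (x : α → k) (s : α) :
    Submodule k (α → k) :=
  V ⊔ Submodule.span k {x - oneAt s}

/-- The space `W^x = {w ∈ k^{E + s} : w↾E ∈ W and w s = ∑_{e ∈ E} w e * x e}`, where the
equality includes the claim that the sum is well defined (finitely many nonzero terms). -/
noncomputable def Wx {α k : Type*} [Field k] (W : Submodule k (α → k)) (x : α → k)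
    (E : Set α) (s : α) : Submodule k (α → k) where
  carrier := {w | Function.support w ⊆ E ∪ {s} ∧ E.indicator w ∈ W ∧
    (E ∩ Function.support fun e => w e * x e).Finite ∧ w s = ∑ᶠ e ∈ E, w e * x e}
  zero_mem' := ⟨by simp, by simp, by simp, by simp⟩
  add_mem' := by
    rintro w₁ w₂ ⟨hs₁, hW₁, hf₁, he₁⟩ ⟨hs₂, hW₂, hf₂, he₂⟩
    refine ⟨(Function.support_add _ _).trans (Set.union_subset hs₁ hs₂), ?_, ?_, ?_⟩
    · have h : E.indicator (w₁ + w₂) = E.indicator w₁ + E.indicator w₂ := by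
        funext a
        by_cases h : a ∈ E <;>
          simp [Set.indicator_of_mem, Set.indicator_of_notMem, h]
      rw [h]; exact W.add_mem hW₁ hW₂
    · refine (hf₁.union hf₂).subset ?_
      rintro e ⟨heE, he⟩
      simp only [Function.mem_support, Pi.add_apply] at he
      by_cases h1 : w₁ e * x e = 0
      · exact Or.inr ⟨heE, fun h2 => he (by rw [add_mul, h1, show w₂ e * x e = 0 from h2, add_zero])⟩
      · exact Or.inl ⟨heE, h1⟩
    · have h : ∑ᶠ e ∈ E, (w₁ + w₂) e * x e
          = (∑ᶠ e ∈ E, w₁ e * x e) + ∑ᶠ e ∈ E, w₂ e * x e := by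
        rw [← finsum_mem_add_distrib' hf₁ hf₂]
        exact finsum_mem_congr rfl fun e _ => by simp [add_mul]
      rw [Pi.add_apply, he₁, he₂, h]
  smul_mem' := by
    rintro c w ⟨hs, hW, hf, he⟩
    refine ⟨(support_const_smul_subset c w).trans hs, ?_, ?_, ?_⟩
    · have h : E.indicator (c • w) = c • E.indicator w := by
        funext a
        by_cases h : a ∈ E <;>
          simp [Set.indicator_of_mem, Set.indicator_of_notMem, h]
      rw [h]; exact W.smul_mem c hW
    · refine hf.subset ?_
      rintro e ⟨heE, he⟩
      refine ⟨heE, fun h0 => ?_⟩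
      simp only [Function.mem_support, Pi.smul_apply, smul_eq_mul] at he
      exact he (by rw [mul_assoc, show w e * x e = 0 from h0, mul_zero])
    · have hsupp : Function.support (E.indicator fun e => w e * x e)
          = E ∩ Function.support fun e => w e * x e := Set.support_indicator
      have h : ∑ᶠ e ∈ E, (c • w) e * x e = c * ∑ᶠ e ∈ E, w e * x e := by
        calc ∑ᶠ e ∈ E, (c • w) e * x e
            = ∑ᶠ e ∈ E, c * (w e * x e) :=
              finsum_mem_congr rfl fun e _ => by simp [mul_assoc]
          _ = ∑ᶠ e, E.indicator (fun e => c * (w e * x e)) e := finsum_mem_def _ _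
          _ = ∑ᶠ e, c * E.indicator (fun e => w e * x e) e := by
              refine finsum_congr fun e => ?_
              by_cases h : e ∈ E <;>
                simp [Set.indicator_of_mem, Set.indicator_of_notMem, h]
          _ = c * ∑ᶠ e, E.indicator (fun e => w e * x e) e :=
              (mul_finsum' _ c (by unfold Function.HasFiniteSupport; rw [hsupp]; exact hf)).symm
          _ = c * ∑ᶠ e ∈ E, w e * x e := by rw [← finsum_mem_def]
      rw [Pi.smul_apply, smul_eq_mul, he, h]

/-! Contracting `P` and deleting `Q` only touches coordinates outside `supp x ∪ {*}`.
On the `V`-side, `x - 𝟙_*` is fixed by contraction to `E ∖ P + *` and lies in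
`k^{E∖(P∪Q) + *}`, so contraction commutes with adjoining its span and restriction
does by the modular law. On the `W`-side, the defining sum of `W^x` only sees
`supp x ⊆ E ∖ (P ∪ Q)`, so it survives both operations. -/

section
variable {α k : Type*} [Field k]

theorem mem_funOn {E : Set α} {v : α → k} : v ∈ FunOn E ↔ support v ⊆ E := Iff.rfl

theorem funOn_mono {A B : Set α} (h : A ⊆ B) : (FunOn A : Submodule k (α → k)) ≤ FunOn B :=
  fun _ hv => (mem_funOn.1 hv).trans h

theorem mem_conV {V : Submodule k (α → k)} {X : Set α} {v : α → k} :
    v ∈ conV V X ↔ ∃ u ∈ V, X.indicator u = v := Iff.rfl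

theorem conV_le_funOn (V : Submodule k (α → k)) (X : Set α) : conV V X ≤ FunOn X := by
  rintro _ ⟨u, -, rfl⟩
  exact support_indicator_subset

theorem sub_oneAt_mem_funOn {x : α → k} {A : Set α} (hx : support x ⊆ A) (s : α) :
    x - oneAt s ∈ FunOn (A ∪ {s}) :=
  (support_sub x (oneAt s)).trans (union_subset_union hx support_indicator_subset)

theorem conV_Vx (V : Submodule k (α → k)) {x : α → k} {s : α} {Y : Set α}
    (hx : x - oneAt s ∈ FunOn Y) : conV (Vx V x s) Y = Vx (conV V Y) x s := by
  have hfix : indLM Y (x - oneAt s) = x - oneAt s := indicator_eq_self.2 hx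
  rw [conV, Vx, Submodule.map_sup, Submodule.map_span, image_singleton, hfix]
  rfl

theorem Vx_inf_funOn (U : Submodule k (α → k)) {x : α → k} {s : α} {Z : Set α}
    (hx : x - oneAt s ∈ FunOn Z) : Vx U x s ⊓ FunOn Z = Vx (U ⊓ FunOn Z) x s := by
  rw [Vx, Vx, sup_comm, sup_inf_assoc_of_le _ ((Submodule.span_singleton_le_iff_mem _ _).2 hx),
    sup_comm]

theorem indicator_union_singleton_of_eq_zero {M : Type*} [Zero M] (A : Set α) {s : α}
    {u : α → M} (hu : u s = 0) : (A ∪ {s}).indicator u = A.indicator u := by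
  rw [← indicator_inter_support (A ∪ {s}), union_inter_distrib_right,
    singleton_inter_eq_empty.2 (notMem_support.2 hu), union_empty, indicator_inter_support]

theorem conV_union_singleton {V : Submodule k (α → k)} {E : Set α} {s : α}
    (hV : V ≤ FunOn E) (hs : s ∉ E) (A : Set α) : conV V (A ∪ {s}) = conV V A := by
  ext v
  simp only [mem_conV]
  refine exists_congr fun u => and_congr_right fun hu => ?_
  rw [indicator_union_singleton_of_eq_zero A (notMem_support.1 fun h => hs (hV hu h))]

theorem inf_funOn_union_singleton {U : Submodule k (α → k)} {E : Set α} {s : α}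
    (hU : U ≤ FunOn E) (hs : s ∉ E) (B : Set α) : U ⊓ FunOn (B ∪ {s}) = U ⊓ FunOn B :=
  le_antisymm
    (fun _ ⟨hvU, hvB⟩ => ⟨hvU, fun _ ha =>
      (hvB ha).resolve_right fun has => hs (mem_singleton_iff.1 has ▸ hU hvU ha)⟩)
    (inf_le_inf_left U (funOn_mono subset_union_left))

theorem mem_Wx {W : Submodule k (α → k)} {x : α → k} {E : Set α} {s : α} {w : α → k} :
    w ∈ Wx W x E s ↔ support w ⊆ E ∪ {s} ∧ E.indicator w ∈ W ∧
      (E ∩ support fun e => w e * x e).Finite ∧ w s = ∑ᶠ e ∈ E, w e * x e :=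
  Iff.rfl

theorem mem_Wx_of_support_subset {W : Submodule k (α → k)} {x : α → k} {E : Set α} {s : α}
    {w : α → k} (hx : support x ⊆ E) :
    w ∈ Wx W x E s ↔ support w ⊆ E ∪ {s} ∧ E.indicator w ∈ W ∧
      (support fun e => w e * x e).Finite ∧ w s = ∑ᶠ e, w e * x e := by
  have hwx : (support fun e => w e * x e) ⊆ E := (support_mul_subset_right _ _).trans hx
  rw [mem_Wx, inter_eq_right.2 hwx, finsum_mem_def, indicator_eq_self.2 hwx]

theorem mul_eq_of_eqOn {M : Type*} [MulZeroClass M] {w w' x : α → M} {B : Set α}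
    (hx : support x ⊆ B) (h : EqOn w w' B) : (fun e => w e * x e) = fun e => w' e * x e := by
  funext e
  by_cases he : e ∈ B
  · rw [h he]
  · rw [notMem_support.1 fun h' => he (hx h'), mul_zero, mul_zero]

theorem support_subset_union_singleton_iff {M : Type*} [Zero M] {E : Set α} {s : α}
    {w : α → M} (hw : support w ⊆ E ∪ {s}) (hs : s ∉ E) (A : Set α) :
    support w ⊆ A ∪ {s} ↔ support (E.indicator w) ⊆ A := by
  rw [support_indicator]
  constructor
  · rintro h a ⟨haE, ha⟩
    exact (h ha).resolve_right fun has => hs (mem_singleton_iff.1 has ▸ haE)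
  · intro h a ha
    exact (hw ha).imp (fun haE => h ⟨haE, ha⟩) id

theorem Wx_inf_funOn (W : Submodule k (α → k)) (x : α → k) {E : Set α} {s : α} (hs : s ∉ E)
    (A : Set α) : Wx W x E s ⊓ FunOn (A ∪ {s}) = Wx (W ⊓ FunOn A) x E s := by
  ext w
  simp only [Submodule.mem_inf, mem_Wx, mem_funOn]
  constructor
  · rintro ⟨⟨hw, hwW, hfin, hsum⟩, hwA⟩
    exact ⟨hw, ⟨hwW, (support_subset_union_singleton_iff hw hs A).1 hwA⟩, hfin, hsum⟩
  · rintro ⟨hw, ⟨hwW, hwA⟩, hfin, hsum⟩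
    exact ⟨⟨hw, hwW, hfin, hsum⟩, (support_subset_union_singleton_iff hw hs A).2 hwA⟩

theorem conV_Wx {W : Submodule k (α → k)} {x : α → k} {E B : Set α} {s : α}
    (hW : W ≤ FunOn E) (hBE : B ⊆ E) (hx : support x ⊆ B) (hs : s ∉ E) :
    conV (Wx W x E s) (B ∪ {s}) = Wx (conV W B) x B s := by
  ext v
  rw [mem_conV, mem_Wx_of_support_subset hx]
  constructor
  · rintro ⟨w, hw, rfl⟩
    obtain ⟨-, hwW, hfin, hsum⟩ := (mem_Wx_of_support_subset (hx.trans hBE)).1 hw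
    rw [mul_eq_of_eqOn hx (eqOn_indicator.mono subset_union_left),
      indicator_of_mem (mem_union_right B (mem_singleton s))]
    refine ⟨support_indicator_subset, mem_conV.2 ⟨E.indicator w, hwW, ?_⟩, hfin, hsum⟩
    rw [indicator_indicator, indicator_indicator, inter_eq_left.2 hBE,
      inter_eq_left.2 subset_union_left]
  · rintro ⟨hvs, hvW, hfin, hsum⟩
    obtain ⟨u, huW, hu⟩ := mem_conV.1 hvW
    have huv : EqOn u v B := fun a ha => by simpa [ha] using congrFun hu a
    have hus : u s = 0 := notMem_support.1 fun h => hs (hW huW h)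
    set w := u + v s • oneAt s
    have hoE : ∀ a ∈ E, oneAt (k := k) s a = 0 := fun a ha =>
      indicator_of_notMem (notMem_singleton_iff.2 (ne_of_mem_of_not_mem ha hs)) _
    have hwv : EqOn w v (B ∪ {s}) := by
      rintro a (haB | has)
      · simp [w, hoE a (hBE haB), huv haB]
      · rw [mem_singleton_iff.1 has]
        simp [w, hus, oneAt]
    have hwE : E.indicator w = u := by
      funext a
      by_cases haE : a ∈ E
      · simp [w, indicator_of_mem haE, hoE a haE]
      · rw [indicator_of_notMem haE]
        exact (notMem_support.1 fun h => haE (hW huW h)).symm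
    refine ⟨w, (mem_Wx_of_support_subset (hx.trans hBE)).2 ⟨?_, hwE ▸ huW, ?_, ?_⟩, ?_⟩
    · exact (support_add _ _).trans (union_subset_union (hW huW)
        ((support_smul_subset_right _ _).trans support_indicator_subset))
    · rwa [mul_eq_of_eqOn hx (hwv.mono subset_union_left)]
    · rwa [mul_eq_of_eqOn hx (hwv.mono subset_union_left),
        hwv (mem_union_right B (mem_singleton s))]
    · rw [indicator_congr hwv, indicator_eq_self.2 hvs]

end

theorem Vx_Wx_minor_commute_general {α k : Type*} [Field k]
    (E : Set α) (V W : Submodule k (α → k)) (h : IsPresentationOn E V W)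
    (x : α → k) (hxE : Function.support x ⊆ E) (s : α) (hs : s ∉ E)
    (P Q : Set α) (hP : P ⊆ E) (hQ : Q ⊆ E)
    (hPx : Disjoint P (Function.support x)) (hQx : Disjoint Q (Function.support x)) :
    pairRes (pairCon (Vx V x s, Wx W x E s) ((E ∪ {s}) \ P)) ((E ∪ {s}) \ (P ∪ Q))
      = (Vx (pairRes (pairCon (V, W) (E \ P)) (E \ (P ∪ Q))).1 x s,
         Wx (pairRes (pairCon (V, W) (E \ P)) (E \ (P ∪ Q))).2 x (E \ (P ∪ Q)) s) := by
  have hsP : s ∉ P := fun h' => hs (hP h')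
  have hsPQ : s ∉ P ∪ Q := fun h' => h'.elim hsP fun h' => hs (hQ h')
  have hxP : support x ⊆ E \ P := subset_sdiff.2 ⟨hxE, hPx.symm⟩
  have hxPQ : support x ⊆ E \ (P ∪ Q) :=
    subset_sdiff.2 ⟨hxE, (disjoint_union_left.2 ⟨hPx, hQx⟩).symm⟩
  have hEP : (E ∪ {s}) \ P = E \ P ∪ {s} := by
    rw [union_sdiff_distrib, (disjoint_singleton_left.2 hsP).sdiff_eq_left]
  have hEPQ : (E ∪ {s}) \ (P ∪ Q) = E \ (P ∪ Q) ∪ {s} := by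
    rw [union_sdiff_distrib, (disjoint_singleton_left.2 hsPQ).sdiff_eq_left]
  simp only [pairRes, pairCon, hEP, hEPQ, Prod.mk.injEq]
  constructor
  · rw [conV_Vx V (sub_oneAt_mem_funOn hxP s), conV_union_singleton h.1 hs,
      Vx_inf_funOn _ (sub_oneAt_mem_funOn hxPQ s),
      inf_funOn_union_singleton ((conV_le_funOn V _).trans (funOn_mono sdiff_subset)) hs]
  · rw [Wx_inf_funOn W x hs, conV_Wx (inf_le_right.trans (funOn_mono sdiff_subset)) sdiff_subset
      hxPQ hs]

/-- If `P` and `Q` are disjoint subsets of `E` not meeting the support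
of `x`, then `Π_x / P \ Q = (Π / P \ Q)_x` as pairs of subspaces of `k^{(E ∖ (P ∪ Q)) + *}`.
Here, for a pair `Pr` with ground set `G`, `Pr / P ∖ Q = ((Pr.(G∖P))↾(G∖(P∪Q)))`, and `s`
plays the role of the new element `*`. -/
theorem Vx_Wx_minor_commute {α k : Type*} [Field k]
    (E : Set α) (V W : Submodule k (α → k)) (h : IsPresentationOn E V W)
    (x : α → k) (hxE : Function.support x ⊆ E) (s : α) (hs : s ∉ E)
    (P Q : Set α) (hP : P ⊆ E) (hQ : Q ⊆ E) (hPQ : Disjoint P Q)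
    (hPx : Disjoint P (Function.support x)) (hQx : Disjoint Q (Function.support x)) :
    pairRes (pairCon (Vx V x s, Wx W x E s) ((E ∪ {s}) \ P)) ((E ∪ {s}) \ (P ∪ Q))
      = (Vx (pairRes (pairCon (V, W) (E \ P)) (E \ (P ∪ Q))).1 x s,
         Wx (pairRes (pairCon (V, W) (E \ P)) (E \ (P ∪ Q))).2 x (E \ (P ∪ Q)) s) :=
  Vx_Wx_minor_commute_general E V W h x hxE s hs P Q hP hQ hPx hQx
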